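/- A string rewriting system is locally confluent if and only if all of its critical branchings are confluent (the critical pair lemma for string rewriting). -/

import Mathlib

/-!
Split the common prefix and the common suffix off the two steps of a local
branching. If the steps are distinct and do not act on disjoint factors, what
remains is a critical branching, whose confluence transfers to the original
branching by whiskering; Peiffer branchings are always confluent, by applying
each rule after the other.
-/

/-- A rewriting step of a string rewriting system `R` over the alphabet `A`:
a rule `(l, r) ∈ R` applied in the context `p — s`, rewriting the word
`p ++ l ++ s` into `p ++ r ++ s`. -/
structure RewStep {A : Type*} (R : Set (List A × List A)) where
  p : List A
  l : List A
  r : List A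
  s : List A
  mem : (l, r) ∈ R

namespace RewStep

variable {A : Type*} {R : Set (List A × List A)}

/-- The source of a rewriting step. -/
def src (f : RewStep R) : List A := f.p ++ f.l ++ f.s

/-- The target of a rewriting step. -/
def tgt (f : RewStep R) : List A := f.p ++ f.r ++ f.s

/-- Whiskering a rewriting step by a context `u — v`. -/
def ctx (u : List A) (f : RewStep R) (v : List A) : RewStep R :=
  ⟨u ++ f.p, f.l, f.r, f.s ++ v, f.mem⟩

end RewStep

/-- The one-step rewriting relation of a string rewriting system. -/
def StringStep {A : Type*} (R : Set (List A × List A)) (u v : List A) : Prop :=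
  ∃ f : RewStep R, f.src = u ∧ f.tgt = v

/-- Two words are joinable if they have a common reduct. -/
def Joinable {A : Type*} (R : Set (List A × List A)) (u v : List A) : Prop :=
  ∃ w : List A, Relation.ReflTransGen (StringStep R) u w ∧
    Relation.ReflTransGen (StringStep R) v w

/-- A Peiffer branching: the two rewriting steps apply to non-overlapping
factors of the common source. -/
def IsPeiffer {A : Type*} {R : Set (List A × List A)} (f g : RewStep R) : Prop :=
  f.p.length + f.l.length ≤ g.p.length ∨ g.p.length + g.l.length ≤ f.p.length

/-- A critical branching: an overlapping local branching (neither aspherical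
nor Peiffer) that is minimal, i.e. not obtained from a smaller local branching
by whiskering with a context. -/
def IsCritical {A : Type*} {R : Set (List A × List A)} (f g : RewStep R) : Prop :=
  f.src = g.src ∧ f ≠ g ∧ ¬ IsPeiffer f g ∧
    ∀ (u v : List A) (f' g' : RewStep R),
      f = f'.ctx u v → g = g'.ctx u v → u = [] ∧ v = []

section CriticalPairs

variable {A : Type*} {R : Set (List A × List A)}

theorem List.exists_common_prefix {l₁ l₂ l : List A} (h₁ : l₁ <+: l) (h₂ : l₂ <+: l) :
    ∃ u a b, l₁ = u ++ a ∧ l₂ = u ++ b ∧ (a = [] ∨ b = []) := by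
  rcases List.prefix_or_prefix_of_prefix h₁ h₂ with ⟨b, rfl⟩ | ⟨a, rfl⟩
  · exact ⟨l₁, [], b, by simp, rfl, .inl rfl⟩
  · exact ⟨l₂, a, [], rfl, by simp, .inr rfl⟩

theorem List.exists_common_suffix {l₁ l₂ l : List A} (h₁ : l₁ <:+ l) (h₂ : l₂ <:+ l) :
    ∃ v a b, l₁ = a ++ v ∧ l₂ = b ++ v ∧ (a = [] ∨ b = []) := by
  rcases List.suffix_or_suffix_of_suffix h₁ h₂ with ⟨b, rfl⟩ | ⟨a, rfl⟩
  · exact ⟨l₁, [], b, by simp, rfl, .inl rfl⟩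
  · exact ⟨l₂, a, [], rfl, by simp, .inr rfl⟩

namespace RewStep

@[simp]
theorem src_ctx (u : List A) (f : RewStep R) (v : List A) :
    (f.ctx u v).src = u ++ f.src ++ v := by
  simp [src, ctx]

@[simp]
theorem tgt_ctx (u : List A) (f : RewStep R) (v : List A) :
    (f.ctx u v).tgt = u ++ f.tgt ++ v := by
  simp [tgt, ctx]

theorem p_prefix_src (f : RewStep R) : f.p <+: f.src :=
  ⟨f.l ++ f.s, by simp [src]⟩

theorem s_suffix_src (f : RewStep R) : f.s <:+ f.src :=
  ⟨f.p ++ f.l, rfl⟩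

theorem isPeiffer_ctx_iff {f g : RewStep R} {u v : List A} :
    IsPeiffer (f.ctx u v) (g.ctx u v) ↔ IsPeiffer f g := by
  simp only [IsPeiffer, ctx, List.length_append]
  omega

theorem eq_ctx_of_eq_append (f : RewStep R) {u v a b : List A}
    (hp : f.p = u ++ a) (hs : f.s = b ++ v) :
    f = (⟨a, f.l, f.r, b, f.mem⟩ : RewStep R).ctx u v := by
  cases f
  simp_all [ctx]

theorem exists_minimal_ctx {f g : RewStep R} (h : f.src = g.src) :
    ∃ (u v : List A) (f' g' : RewStep R), f = f'.ctx u v ∧ g = g'.ctx u v ∧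
      (f'.p = [] ∨ g'.p = []) ∧ (f'.s = [] ∨ g'.s = []) := by
  obtain ⟨u, a, b, hfp, hgp, hab⟩ :=
    List.exists_common_prefix f.p_prefix_src (h ▸ g.p_prefix_src)
  obtain ⟨v, c, d, hfs, hgs, hcd⟩ :=
    List.exists_common_suffix f.s_suffix_src (h ▸ g.s_suffix_src)
  exact ⟨u, v, _, _, f.eq_ctx_of_eq_append hfp hfs, g.eq_ctx_of_eq_append hgp hgs, hab, hcd⟩

theorem ctx_eq_nil_of_minimal {f g f' g' : RewStep R} {u v : List A}
    (hp : f.p = [] ∨ g.p = []) (hs : f.s = [] ∨ g.s = [])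
    (hf : f = f'.ctx u v) (hg : g = g'.ctx u v) : u = [] ∧ v = [] := by
  subst hf hg
  simp only [ctx, List.append_eq_nil_iff] at hp hs
  tauto

end RewStep

theorem StringStep.of_mem (p s : List A) {l r : List A} (h : (l, r) ∈ R) :
    StringStep R (p ++ l ++ s) (p ++ r ++ s) :=
  ⟨⟨p, l, r, s, h⟩, rfl, rfl⟩

theorem StringStep.ctx (u v : List A) {a b : List A} (h : StringStep R a b) :
    StringStep R (u ++ a ++ v) (u ++ b ++ v) := by
  obtain ⟨f, rfl, rfl⟩ := h
  exact ⟨f.ctx u v, RewStep.src_ctx u f v, RewStep.tgt_ctx u f v⟩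

namespace Joinable

theorem refl (a : List A) : Joinable R a a :=
  ⟨a, .refl, .refl⟩

theorem symm {a b : List A} (h : Joinable R a b) : Joinable R b a :=
  let ⟨w, ha, hb⟩ := h
  ⟨w, hb, ha⟩

theorem ctx (u v : List A) {a b : List A} (h : Joinable R a b) :
    Joinable R (u ++ a ++ v) (u ++ b ++ v) :=
  let ⟨w, ha, hb⟩ := h
  ⟨u ++ w ++ v, ha.lift (fun x => u ++ x ++ v) fun _ _ => StringStep.ctx u v,
    hb.lift (fun x => u ++ x ++ v) fun _ _ => StringStep.ctx u v⟩

end Joinable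

theorem joinable_of_disjoint (x m y : List A) {l₁ r₁ l₂ r₂ : List A}
    (h₁ : (l₁, r₁) ∈ R) (h₂ : (l₂, r₂) ∈ R) :
    Joinable R (x ++ r₁ ++ (m ++ l₂ ++ y)) (x ++ l₁ ++ (m ++ r₂ ++ y)) := by
  refine ⟨x ++ r₁ ++ (m ++ r₂ ++ y), .single ?_, .single ?_⟩
  · simpa using StringStep.of_mem (x ++ r₁ ++ m) y h₂
  · simpa using StringStep.of_mem x (m ++ r₂ ++ y) h₁

theorem joinable_tgt_of_length_le {f g : RewStep R} (hsrc : f.src = g.src)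
    (h : f.p.length + f.l.length ≤ g.p.length) : Joinable R f.tgt g.tgt := by
  obtain ⟨m, hm⟩ : f.p ++ f.l <+: g.p :=
    List.prefix_of_prefix_length_le ⟨f.s, hsrc⟩ g.p_prefix_src (by simpa using h)
  have hfs : f.s = m ++ g.l ++ g.s := by
    simpa [RewStep.src, ← hm] using hsrc
  simpa [RewStep.tgt, hfs, ← hm] using joinable_of_disjoint f.p m g.s f.mem g.mem

theorem joinable_tgt_of_isPeiffer {f g : RewStep R} (hsrc : f.src = g.src) (hP : IsPeiffer f g) :
    Joinable R f.tgt g.tgt :=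
  hP.elim (joinable_tgt_of_length_le hsrc) fun h => (joinable_tgt_of_length_le hsrc.symm h).symm

end CriticalPairs

/-- Critical pair lemma for string rewriting: a string rewriting system is
locally confluent if and only if all of its critical branchings are
confluent. -/
theorem locally_confluent_iff_critical_confluent {A : Type*}
    (R : Set (List A × List A)) :
    (∀ a b c : List A, StringStep R a b → StringStep R a c → Joinable R b c) ↔
    (∀ f g : RewStep R, IsCritical f g → Joinable R f.tgt g.tgt) := by
  constructor
  · rintro H f g ⟨hsrc, -⟩
    exact H _ _ _ ⟨f, rfl, rfl⟩ ⟨g, hsrc.symm, rfl⟩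
  · rintro H _ _ _ ⟨f, rfl, rfl⟩ ⟨g, hsrc, rfl⟩
    by_cases hfg : f = g
    · subst hfg
      exact Joinable.refl _
    by_cases hP : IsPeiffer f g
    · exact joinable_tgt_of_isPeiffer hsrc.symm hP
    obtain ⟨u, v, f, g, rfl, rfl, hp, hs⟩ := RewStep.exists_minimal_ctx hsrc.symm
    have hcrit : IsCritical f g :=
      ⟨by simpa using hsrc.symm, fun h => hfg (h ▸ rfl),
        fun h => hP (RewStep.isPeiffer_ctx_iff.2 h),
        fun _ _ _ _ => RewStep.ctx_eq_nil_of_minimal hp hs⟩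
    simpa using (H f g hcrit).ctx u v
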